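/- Let μ be a finite Borel measure on ℂ with compact support. Then the logarithmic potential p_μ(z) = ∫_ℂ log|w − z| dμ(w) is subharmonic on all of ℂ. -/

import Mathlib

open MeasureTheory Complex Filter Topology
open scoped ENNReal

noncomputable def posE (x : EReal) : ℝ≥0∞ := if x = ⊤ then ⊤ else ENNReal.ofReal x.toReal

noncomputable def eInt {X : Type*} [MeasurableSpace X] (μ : Measure X) (f : X → EReal) : EReal :=
  ENNReal.toEReal (∫⁻ x, posE (f x) ∂μ) - ENNReal.toEReal (∫⁻ x, posE (-(f x)) ∂μ)

def Subharmonic (u : ℂ → EReal) (D : Set ℂ) : Prop :=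
  UpperSemicontinuousOn u D ∧
    ∀ w ∈ D, ∃ ρ > (0:ℝ), ∀ r : ℝ, 0 ≤ r → r < ρ →
      ∀ g : ℝ → ℝ,
        (∀ t ∈ Set.Icc (0:ℝ) (2*Real.pi),
          u (w + (r : ℂ) * Complex.exp (t * Complex.I)) ≤ (g t : EReal)) →
        IntervalIntegrable g volume 0 (2*Real.pi) →
        u w ≤ (((1/(2*Real.pi)) * ∫ t in (0:ℝ)..(2*Real.pi), g t : ℝ) : EReal)

def HarmonicOnC (h : ℂ → ℝ) (U : Set ℂ) : Prop :=
  ContDiffOn ℝ 2 h U ∧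
    ∀ z ∈ U, iteratedFDeriv ℝ 2 h z ![1, 1] + iteratedFDeriv ℝ 2 h z ![Complex.I, Complex.I] = 0

def HarmonicOnRn {n : ℕ} (h : EuclideanSpace ℝ (Fin n) → ℝ)
    (U : Set (EuclideanSpace ℝ (Fin n))) : Prop :=
  ContDiffOn ℝ 2 h U ∧
    ∀ x ∈ U, ∑ i : Fin n,
      iteratedFDeriv ℝ 2 h x ![EuclideanSpace.single i 1, EuclideanSpace.single i 1] = 0

/-- Boundary of `D` taken in the one-point compactification of `ℂ`. -/
def cbdry (D : Set ℂ) : Set (OnePoint ℂ) :=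
  frontier ((fun z : ℂ => (z : OnePoint ℂ)) '' D)

/-- The filter of approach to `ζ ∈ ∂D ⊆ ℂ∞` through points of `D`. -/
noncomputable def bfilter (D : Set ℂ) (ζ : OnePoint ℂ) : Filter ℂ :=
  Filter.comap (fun z : ℂ => (z : OnePoint ℂ)) (nhds ζ) ⊓ Filter.principal D

noncomputable def elog (x : ℝ) : EReal :=
  if x = 0 then (⊥ : EReal) else ((Real.log x : ℝ) : EReal)

noncomputable def logPotential (μ : Measure ℂ) (z : ℂ) : EReal :=
  eInt μ (fun w => elog ‖w - z‖)

noncomputable def lapl (φ : ℂ → ℝ) (z : ℂ) : ℝ :=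
  iteratedFDeriv ℝ 2 φ z ![1, 1] + iteratedFDeriv ℝ 2 φ z ![Complex.I, Complex.I]

noncomputable def energy (μ : Measure ℂ) : EReal :=
  - eInt μ (fun z => eInt μ (fun w => elog ‖z - w‖))

noncomputable def smoothConv (u : ℂ → EReal) (χ : ℂ → ℝ) (r : ℝ) (z : ℂ) : EReal :=
  eInt volume (fun w => (((r ^ 2)⁻¹ * χ (w / (r : ℂ)) : ℝ) : EReal) * u (z - w))

/-!
Truncating the logarithm to `log (max x e⁻ⁿ)` gives continuous potentials `pₙ` that decrease to
the logarithmic potential, by monotone convergence applied to the positive and negative parts.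
Each `pₙ` satisfies the submean inequality on every circle: by Fubini it suffices to check it for
the truncated kernel, and there it follows from the exact circle average
`log R + log⁺ (‖c - a‖ / R) ≥ log ‖c - a‖` of `log ‖z - a‖`. A decreasing limit of continuous
functions is upper semicontinuous, and the submean inequality passes to the limit by dominated
convergence applied to `max pₙ g` for any integrable majorant `g` on the circle.
-/

section ExtendedIntegral

variable {X : Type*} [MeasurableSpace X] {μ : Measure X}

theorem posE_eq_toENNReal : posE = EReal.toENNReal := rfl

theorem eInt_coe_of_integrable {f : X → ℝ} (hf : Integrable f μ) :
    eInt μ (fun x => (f x : EReal)) = ((∫ x, f x ∂μ : ℝ) : EReal) := by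
  have hfin : ∀ g : X → ℝ, Integrable g μ → ∫⁻ x, ENNReal.ofReal (g x) ∂μ ≠ ⊤ :=
    fun g hg => hg.lintegral_lt_top.ne
  simp only [eInt, posE_eq_toENNReal, ← EReal.coe_neg, EReal.real_coe_toENNReal,
    integral_eq_lintegral_pos_part_sub_lintegral_neg_part hf, EReal.coe_sub,
    EReal.coe_ennreal_toReal (hfin _ hf),
    EReal.coe_ennreal_toReal (hfin (fun x => -f x) hf.neg)]

theorem tendsto_eInt_of_antitone {f : ℕ → X → EReal} {F : X → EReal}
    (hf : ∀ n, Measurable (f n)) (hanti : ∀ x, Antitone fun n => f n x)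
    (hF : ∀ x, Tendsto (fun n => f n x) atTop (𝓝 (F x)))
    (h0 : ∫⁻ x, posE (f 0 x) ∂μ ≠ ⊤) :
    Tendsto (fun n => eInt μ (f n)) atTop (𝓝 (eInt μ F)) := by
  have hpos : Tendsto (fun n => ∫⁻ x, posE (f n x) ∂μ) atTop (𝓝 (∫⁻ x, posE (F x) ∂μ)) :=
    lintegral_tendsto_of_tendsto_of_antitone
      (fun n => (measurable_ereal_toENNReal.comp (hf n)).aemeasurable)
      (ae_of_all _ fun x _ _ hmn => EReal.toENNReal_le_toENNReal (hanti x hmn)) h0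
      (ae_of_all _ fun x => (EReal.continuous_toENNReal.tendsto _).comp (hF x))
  have hneg : Tendsto (fun n => ∫⁻ x, posE (-f n x) ∂μ) atTop (𝓝 (∫⁻ x, posE (-F x) ∂μ)) :=
    lintegral_tendsto_of_tendsto_of_monotone
      (fun n => (measurable_ereal_toENNReal.comp (hf n).neg).aemeasurable)
      (ae_of_all _ fun x _ _ hmn =>
        EReal.toENNReal_le_toENNReal (EReal.neg_le_neg_iff.2 (hanti x hmn)))
      (ae_of_all _ fun x =>
        (EReal.continuous_toENNReal.tendsto _).comp ((continuous_neg.tendsto _).comp (hF x)))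
  have hFfin : ∫⁻ x, posE (F x) ∂μ ≠ ⊤ :=
    ne_top_of_le_ne_top h0 (lintegral_mono fun x =>
      EReal.toENNReal_le_toENNReal ((hanti x).le_of_tendsto (hF x) 0))
  refine (EReal.continuousAt_add (Or.inl ?_) (Or.inl ?_)).tendsto.comp
    ((continuous_coe_ennreal_ereal.tendsto _).comp hpos |>.prodMk_nhds
      ((continuous_neg.tendsto _).comp
        ((continuous_coe_ennreal_ereal.tendsto _).comp hneg)))
  · simpa using hFfin
  · simp

end ExtendedIntegral

section TruncatedLog

noncomputable def truncLog (n : ℕ) (x : ℝ) : ℝ := Real.log (max x (Real.exp (-n)))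

theorem max_exp_neg_pos (n : ℕ) (x : ℝ) : 0 < max x (Real.exp (-n)) :=
  (Real.exp_pos _).trans_le (le_max_right _ _)

theorem continuous_truncLog (n : ℕ) : Continuous (truncLog n) :=
  (continuous_id.max continuous_const).log fun x => (max_exp_neg_pos n x).ne'

theorem truncLog_antitone (x : ℝ) : Antitone fun n => truncLog n x := fun _ _ hmn =>
  Real.log_le_log (max_exp_neg_pos _ x)
    (max_le_max le_rfl (Real.exp_le_exp.2 (by simpa using hmn)))

theorem neg_le_truncLog (n : ℕ) (x : ℝ) : -(n : ℝ) ≤ truncLog n x := by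
  simpa [truncLog] using Real.log_le_log (Real.exp_pos _) (le_max_right x (Real.exp (-n)))

theorem truncLog_le_self (n : ℕ) {x : ℝ} (hx : 0 ≤ x) : truncLog n x ≤ x := by
  have hexp : Real.exp (-n) ≤ 1 := Real.exp_le_one_iff.2 (by simp)
  have := Real.log_le_sub_one_of_pos (max_exp_neg_pos n x)
  rw [truncLog]
  cases max_cases x (Real.exp (-n)) <;> linarith

theorem abs_truncLog_le (n : ℕ) {x : ℝ} (hx : 0 ≤ x) : |truncLog n x| ≤ n + x :=
  abs_le.2 ⟨by linarith [neg_le_truncLog n x], by linarith [truncLog_le_self n hx]⟩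

theorem tendsto_truncLog {x : ℝ} (hx : 0 ≤ x) :
    Tendsto (fun n => (truncLog n x : EReal)) atTop (𝓝 (elog x)) := by
  rcases hx.eq_or_lt with rfl | hx
  · have hzero (n : ℕ) : truncLog n 0 = -n := by
      rw [truncLog, max_eq_right (Real.exp_pos _).le, Real.log_exp]
    simp only [hzero, elog, if_pos]
    exact EReal.tendsto_coe_nhds_bot_iff.2
      (tendsto_neg_atTop_atBot.comp tendsto_natCast_atTop_atTop)
  · rw [elog, if_neg hx.ne']
    refine tendsto_const_nhds.congr' ?_
    obtain ⟨N, hN⟩ := exists_nat_ge (-Real.log x)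
    filter_upwards [eventually_ge_atTop N] with n hn
    have hexp : Real.exp (-n) ≤ x := by
      calc Real.exp (-n) ≤ Real.exp (Real.log x) :=
            Real.exp_le_exp.2 (by linarith [(Nat.cast_le (α := ℝ)).2 hn])
        _ = x := Real.exp_log hx
    rw [truncLog, max_eq_left hexp]

end TruncatedLog

section CircleAverage

open Real

theorem log_norm_sub_le_circleAverage {a c : ℂ} {R : ℝ} (hca : c ≠ a) (hR : R ≠ 0) :
    Real.log ‖c - a‖ ≤ circleAverage (fun z => Real.log ‖z - a‖) c R := by
  have hR' : 0 < |R| := abs_pos.2 hR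
  rw [← circleAverage_abs_radius,
    circleAverage_log_norm_sub_const_eq_log_radius_add_posLog hR'.ne']
  calc Real.log ‖c - a‖ = Real.log |R| + Real.log (|R|⁻¹ * ‖c - a‖) := by
        rw [Real.log_mul (inv_ne_zero hR'.ne') (norm_ne_zero_iff.2 (sub_ne_zero.2 hca)),
          Real.log_inv]
        ring
    _ ≤ Real.log |R| + log⁺ (|R|⁻¹ * ‖c - a‖) := by grw [posLog_apply, ← le_max_right]

theorem log_max_norm_sub_le_circleAverage (a c : ℂ) (R : ℝ) {ε : ℝ} (hε : 0 < ε) :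
    Real.log (max ‖c - a‖ ε) ≤ circleAverage (fun z => Real.log (max ‖z - a‖ ε)) c R := by
  rcases eq_or_ne R 0 with rfl | hR
  · simp
  have hint : CircleIntegrable (fun z => Real.log (max ‖z - a‖ ε)) c R :=
    ContinuousOn.circleIntegrable' <| Continuous.continuousOn <|
      (by fun_prop : Continuous fun z : ℂ => max ‖z - a‖ ε).log
        fun z => (hε.trans_le (le_max_right _ _)).ne'
  rcases le_or_gt ‖c - a‖ ε with h | h
  · rw [max_eq_right h, ← circleAverage_const (Real.log ε) c R]
    exact circleAverage_mono (circleIntegrable_const _ _ _) hint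
      fun z _ => Real.log_le_log hε (le_max_right _ _)
  · have hca : c ≠ a := fun hca => by simp [hca] at h; linarith
    -- `log ‖z - a‖ ≤ log (max ‖z - a‖ ε)` holds except at the single point `z = a`.
    set g := fun z => min (Real.log ‖z - a‖) (Real.log (max ‖z - a‖ ε))
    have hg : (fun z => Real.log ‖z - a‖) =ᶠ[codiscreteWithin (Metric.sphere c |R|)] g := by
      filter_upwards [compl_singleton_mem_codiscreteWithin a] with z hz
      exact (min_eq_left (Real.log_le_log (norm_pos_iff.2 (sub_ne_zero.2 hz))
        (le_max_left _ _))).symm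
    rw [max_eq_left h.le]
    calc Real.log ‖c - a‖ ≤ circleAverage (fun z => Real.log ‖z - a‖) c R :=
          log_norm_sub_le_circleAverage hca hR
      _ = circleAverage g c R := circleAverage_congr_codiscreteWithin hg hR
      _ ≤ _ := circleAverage_mono
          ((circleIntegrable_log_norm_sub_const R).congr_codiscreteWithin hg) hint
          fun _ _ => min_le_right _ _

theorem integral_le_circleAverage_integral {α : Type*} [MeasurableSpace α] {μ : Measure α}
    [SFinite μ] {f : ℂ → α → ℝ} {c : ℂ} {R : ℝ} (hc : Integrable (f c) μ)
    (hf : Integrable (fun p : ℝ × α => f (circleMap c R p.1) p.2)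
      ((volume.restrict (Set.uIoc 0 (2 * π))).prod μ))
    (hmean : ∀ w, f c w ≤ circleAverage (fun z => f z w) c R) :
    ∫ w, f c w ∂μ ≤ circleAverage (fun z => ∫ w, f z w ∂μ) c R := by
  have hswap : circleAverage (fun z => ∫ w, f z w ∂μ) c R =
      ∫ w, circleAverage (fun z => f z w) c R ∂μ := by
    simp only [circleAverage_def, smul_eq_mul]
    rw [intervalIntegral_integral_swap hf, integral_const_mul]
  have hint : Integrable (fun w => circleAverage (fun z => f z w) c R) μ := by
    simpa [circleAverage_def, intervalIntegral.intervalIntegral_eq_integral_uIoc,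
      two_pi_pos.le] using hf.integral_prod_right.const_mul (2 * π)⁻¹
  exact hswap ▸ integral_mono hc hint hmean

end CircleAverage

section TruncatedPotential

open Real

noncomputable def truncPotential (μ : Measure ℂ) (n : ℕ) (z : ℂ) : ℝ :=
  ∫ w, truncLog n ‖w - z‖ ∂μ

variable {μ : Measure ℂ} [IsFiniteMeasure μ]

theorem abs_truncLog_norm_sub_le (n : ℕ) (w z : ℂ) :
    |truncLog n ‖w - z‖| ≤ n + ‖w‖ + ‖z‖ :=
  (abs_truncLog_le n (norm_nonneg _)).trans (by linarith [norm_sub_le w z])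

theorem continuous_truncLog_norm_sub (n : ℕ) :
    Continuous fun p : ℂ × ℂ => truncLog n ‖p.1 - p.2‖ :=
  (continuous_truncLog n).comp (by fun_prop)

theorem integrable_truncLog_norm_sub (hμ : Integrable (‖·‖) μ) (n : ℕ) (z : ℂ) :
    Integrable (fun w => truncLog n ‖w - z‖) μ :=
  (((integrable_const (n : ℝ)).add hμ).add (integrable_const ‖z‖)).mono'
    ((continuous_truncLog_norm_sub n).comp
      (by fun_prop : Continuous fun w : ℂ => (w, z))).aestronglyMeasurable
    (ae_of_all _ fun w => abs_truncLog_norm_sub_le n w z)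

theorem truncPotential_antitone (hμ : Integrable (‖·‖) μ) : Antitone (truncPotential μ) :=
  fun m n hmn z => integral_mono (integrable_truncLog_norm_sub hμ n z)
    (integrable_truncLog_norm_sub hμ m z) fun _ => truncLog_antitone _ hmn

theorem continuous_truncPotential (hμ : Integrable (‖·‖) μ) (n : ℕ) :
    Continuous (truncPotential μ n) := by
  refine continuous_iff_continuousAt.2 fun z₀ => continuousAt_of_dominated
    (bound := fun w => n + ‖w‖ + (‖z₀‖ + 1)) ?_ ?_ ?_ ?_
  · exact Eventually.of_forall fun z =>
      (integrable_truncLog_norm_sub hμ n z).aestronglyMeasurable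
  · filter_upwards [Metric.ball_mem_nhds z₀ one_pos] with z hz
    refine ae_of_all _ fun w => (abs_truncLog_norm_sub_le n w z).trans ?_
    have := norm_le_of_mem_closedBall (Metric.ball_subset_closedBall hz)
    linarith
  · exact ((integrable_const _).add hμ).add (integrable_const _)
  · exact ae_of_all _ fun w =>
      ((continuous_truncLog_norm_sub n).comp
        (by fun_prop : Continuous fun z : ℂ => (w, z))).continuousAt

theorem truncPotential_le_circleAverage (hμ : Integrable (‖·‖) μ) (n : ℕ) (c : ℂ) (R : ℝ) :
    truncPotential μ n c ≤ circleAverage (truncPotential μ n) c R := by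
  have : IsFiniteMeasure (volume.restrict (Set.uIoc 0 (2 * π))) := by
    rw [Set.uIoc_of_le two_pi_pos.le]; infer_instance
  refine integral_le_circleAverage_integral (f := fun z w => truncLog n ‖w - z‖)
    (integrable_truncLog_norm_sub hμ n c) ?_ fun w => ?_
  · have hbound : Integrable (fun p : ℝ × ℂ => (n : ℝ) + ‖p.2‖ + (‖c‖ + |R|))
        ((volume.restrict (Set.uIoc 0 (2 * π))).prod μ) :=
      ((integrable_const _).add (hμ.comp_snd _)).add (integrable_const _)
    have hmeas : Continuous fun p : ℝ × ℂ => truncLog n ‖p.2 - circleMap c R p.1‖ :=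
      (continuous_truncLog_norm_sub n).comp
        (by fun_prop : Continuous fun p : ℝ × ℂ => (p.2, circleMap c R p.1))
    refine hbound.mono' hmeas.aestronglyMeasurable
      (ae_of_all _ fun p => (abs_truncLog_norm_sub_le n _ _).trans ?_)
    have := norm_le_norm_add_norm_sub' (circleMap c R p.1) c
    rw [circleMap_sub_center, norm_circleMap_zero] at this
    linarith
  · simpa only [truncLog, norm_sub_rev w] using
      log_max_norm_sub_le_circleAverage w c R (Real.exp_pos (-n))

theorem tendsto_truncPotential (hμ : Integrable (‖·‖) μ) (z : ℂ) :
    Tendsto (fun n => (truncPotential μ n z : EReal)) atTop (𝓝 (logPotential μ z)) := by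
  have h := tendsto_eInt_of_antitone (μ := μ) (f := fun n w => (truncLog n ‖w - z‖ : EReal))
    (F := fun w => elog ‖w - z‖)
    (fun n => measurable_coe_real_ereal.comp
      ((continuous_truncLog_norm_sub n).comp
        (by fun_prop : Continuous fun w : ℂ => (w, z))).measurable)
    (fun w _ _ hmn => EReal.coe_le_coe_iff.2 (truncLog_antitone _ hmn))
    (fun w => tendsto_truncLog (norm_nonneg _))
    (by simpa [posE_eq_toENNReal] using
      (integrable_truncLog_norm_sub hμ 0 z).lintegral_lt_top.ne)
  rw [logPotential]
  simpa only [truncPotential, eInt_coe_of_integrable (integrable_truncLog_norm_sub hμ _ z)]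
    using h

end TruncatedPotential

section DecreasingLimits

open Real

theorem IntervalIntegrable.max {μ : Measure ℝ} {f g : ℝ → ℝ} {a b : ℝ}
    (hf : IntervalIntegrable f μ a b) (hg : IntervalIntegrable g μ a b) :
    IntervalIntegrable (fun t => max (f t) (g t)) μ a b :=
  ⟨hf.1.sup hg.1, hf.2.sup hg.2⟩

theorem tendsto_intervalIntegral_max_of_antitone {q : ℕ → ℝ → ℝ} {g : ℝ → ℝ} {a b : ℝ}
    (hq : ∀ n, IntervalIntegrable (q n) volume a b) (hanti : Antitone q)
    (hg : IntervalIntegrable g volume a b)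
    (hlim : ∀ t ∈ Set.uIoc a b, Tendsto (fun n => max (q n t) (g t)) atTop (𝓝 (g t))) :
    Tendsto (fun n => ∫ t in a..b, max (q n t) (g t)) atTop (𝓝 (∫ t in a..b, g t)) := by
  refine intervalIntegral.tendsto_integral_filter_of_dominated_convergence
    (fun t => |q 0 t| + |g t|) (Eventually.of_forall fun n => ?_)
    (Eventually.of_forall fun n => ae_of_all _ fun t _ => ?_) ((hq 0).abs.add hg.abs)
    (ae_of_all _ hlim)
  · exact ((hq n).max hg).def'.aestronglyMeasurable
  · have := hanti (Nat.zero_le n) t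
    rw [Real.norm_eq_abs, abs_le]
    constructor <;> cases max_cases (q n t) (g t) <;>
      linarith [neg_abs_le (g t), le_abs_self (q 0 t), le_abs_self (g t), abs_nonneg (q 0 t)]

theorem subharmonic_of_tendsto_antitone {u : ℂ → EReal} {p : ℕ → ℂ → ℝ}
    (hcont : ∀ n, Continuous (p n)) (hanti : Antitone p)
    (hlim : ∀ z, Tendsto (fun n => (p n z : EReal)) atTop (𝓝 (u z)))
    (hmean : ∀ n c R, p n c ≤ circleAverage (p n) c R) : Subharmonic u Set.univ := by
  have hanti' (z : ℂ) : Antitone fun n => (p n z : EReal) :=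
    fun _ _ hmn => EReal.coe_le_coe_iff.2 (hanti hmn z)
  have hle (n : ℕ) (z : ℂ) : u z ≤ p n z := (hanti' z).le_of_tendsto (hlim z) n
  refine ⟨?_, fun w _ => ⟨1, one_pos, fun r _ _ g hg hgint => ?_⟩⟩
  · have hu : u = fun z => ⨅ n, (p n z : EReal) :=
      funext fun z => tendsto_nhds_unique (hlim z) (tendsto_atTop_iInf (hanti' z))
    exact hu ▸ (upperSemicontinuous_iInf fun n =>
      (continuous_coe_real_ereal.comp (hcont n)).upperSemicontinuous).upperSemicontinuousOn _
  set q : ℕ → ℝ → ℝ := fun n t => p n (circleMap w r t)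
  have hq (n : ℕ) : IntervalIntegrable (q n) volume 0 (2 * π) :=
    ((hcont n).comp (continuous_circleMap w r)).intervalIntegrable _ _
  have hmax_lim : ∀ t ∈ Set.uIoc 0 (2 * π),
      Tendsto (fun n => max (q n t) (g t)) atTop (𝓝 (g t)) := by
    intro t ht
    have ht' : t ∈ Set.Icc 0 (2 * π) :=
      Set.Ioc_subset_Icc_self (by rwa [Set.uIoc_of_le two_pi_pos.le] at ht)
    have hgt : u (circleMap w r t) ≤ g t := hg t ht'
    have h := (hlim (circleMap w r t)).max (tendsto_const_nhds (x := (g t : EReal)))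
    rw [max_eq_right hgt] at h
    exact EReal.tendsto_coe.1 (by simpa only [EReal.coe_strictMono.monotone.map_max] using h)
  have hbound (n : ℕ) : u w ≤ ((2 * π)⁻¹ * ∫ t in 0..2 * π, max (q n t) (g t) : ℝ) := by
    refine (hle n w).trans (EReal.coe_le_coe_iff.2 ((hmean n w r).trans ?_))
    rw [circleAverage_def, smul_eq_mul]
    gcongr
    exact intervalIntegral.integral_mono_on two_pi_pos.le (hq n) ((hq n).max hgint)
      fun t _ => le_max_left _ _
  have hlim' := (continuous_coe_real_ereal.tendsto _).comp
    ((tendsto_intervalIntegral_max_of_antitone hq (fun _ _ hmn t => hanti hmn _) hgint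
      hmax_lim).const_mul (2 * π)⁻¹)
  simpa only [one_div] using ge_of_tendsto' hlim' hbound

end DecreasingLimits

theorem stmt9 (μ : Measure ℂ) [IsFiniteMeasure μ] (K : Set ℂ) (hK : IsCompact K)
    (hsupp : μ Kᶜ = 0) :
    Subharmonic (logPotential μ) Set.univ := by
  obtain ⟨M, hM⟩ := hK.isBounded.exists_norm_le
  have hμ : Integrable (‖·‖) μ :=
    (integrable_const M).mono' continuous_norm.aestronglyMeasurable
      ((ae_iff.2 hsupp).mono fun w hw => by simpa using hM w hw)
  exact subharmonic_of_tendsto_antitone (continuous_truncPotential hμ)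
    (truncPotential_antitone hμ) (tendsto_truncPotential hμ)
    (truncPotential_le_circleAverage hμ)
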